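/- Let ν > −1 be an integer, q > 0, and let f : [0,∞) → ℝ be continuously differentiable with x f(x) J_ν(qx) → 0 as x → 0⁺ and as x → ∞, and suppose the improper integrals ∫₀^∞ x f(x) J_{ν+1}(qx) dx, ∫₀^∞ x f(x) J_{ν−1}(qx) dx and ∫₀^∞ x f'(x) J_ν(qx) dx all converge. Then (ν − 1) ∫₀^∞ x f(x) J_{ν+1}(qx) dx = (ν + 1) ∫₀^∞ x f(x) J_{ν−1}(qx) dx + (2ν/q) ∫₀^∞ x f'(x) J_ν(qx) dx. -/

import Mathlib

/-!
Set `g(x) = x f(x) J_ν(qx)`. The recurrences `z J_ν' = z J_{ν-1} - ν J_ν` and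
`z J_ν' = ν J_ν - z J_{ν+1}`, both read off the power series, combine to
`2ν (J_ν + z J_ν') = z ((ν+1) J_{ν-1} - (ν-1) J_{ν+1})`, so `ν g'` is
`(q/2) ((ν+1) x f J_{ν-1}(qx) - (ν-1) x f J_{ν+1}(qx)) + ν x f' J_ν(qx)`.
Integrating over `[0, R]` with `g(0) = 0` and letting `R → ∞`, where `g(R) → 0`,
gives the identity.
-/

open MeasureTheory Filter Topology Real Set

/-- Bessel function of the first kind of integer order `n ≥ 0`:
`J_n(z) = ∑ (-1)^m (z/2)^(2m+n) / (m! (m+n)!)`. -/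
noncomputable def besselJ (n : ℕ) (z : ℝ) : ℝ :=
  ∑' m : ℕ, (-1 : ℝ) ^ m * (z / 2) ^ (2 * m + n) /
    ((Nat.factorial m : ℝ) * (Nat.factorial (m + n) : ℝ))

/-- Bessel function of the first kind of arbitrary integer order, with
`J_{-n}(z) = (-1)^n J_n(z)`; in particular `J_{-1} = -J_1`. -/
noncomputable def besselJZ (n : ℤ) (z : ℝ) : ℝ :=
  if 0 ≤ n then besselJ n.toNat z else (-1 : ℝ) ^ (-n).toNat * besselJ (-n).toNat z

/-- `f` has `L` as its improper Riemann integral over `[0, ∞)`. -/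
def HasImproperIntegral (f : ℝ → ℝ) (L : ℝ) : Prop :=
  Tendsto (fun R : ℝ => ∫ x in (0:ℝ)..R, f x) atTop (𝓝 L)

noncomputable def besselTerm (n m : ℕ) (z : ℝ) : ℝ :=
  (-1 : ℝ) ^ m * (z / 2) ^ (2 * m + n) / ((Nat.factorial m : ℝ) * (Nat.factorial (m + n) : ℝ))

noncomputable def besselTermDeriv (n m : ℕ) (z : ℝ) : ℝ :=
  (-1 : ℝ) ^ m * (2 * m + n : ℕ) * (z / 2) ^ (2 * m + n - 1) /
    (2 * ((Nat.factorial m : ℝ) * (Nat.factorial (m + n) : ℝ)))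

namespace besselTerm

variable (n m : ℕ) (z : ℝ)

theorem hasDerivAt : HasDerivAt (besselTerm n m) (besselTermDeriv n m z) z := by
  have h := ((((hasDerivAt_id z).div_const 2).pow (2 * m + n)).const_mul ((-1 : ℝ) ^ m)).div_const
    ((Nat.factorial m : ℝ) * (Nat.factorial (m + n) : ℝ))
  refine h.congr_deriv ?_
  simp only [besselTermDeriv, id]
  push_cast
  ring

theorem mul_deriv : z * besselTermDeriv n m z = (2 * m + n : ℕ) * besselTerm n m z := by
  unfold besselTerm besselTermDeriv
  generalize 2 * m + n = k
  cases k with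
  | zero => simp
  | succ k =>
    rw [Nat.add_sub_cancel, pow_succ]
    field_simp

theorem mul_eq : z * besselTerm n m z = 2 * (m + n + 1) * besselTerm (n + 1) m z := by
  unfold besselTerm
  rw [show 2 * m + (n + 1) = 2 * m + n + 1 by ring, show m + (n + 1) = m + n + 1 by ring,
    Nat.factorial_succ (m + n), pow_succ]
  push_cast
  field_simp

theorem mul_succ_eq : z * besselTerm (n + 1) m z = -(2 * (m + 1)) * besselTerm n (m + 1) z := by
  unfold besselTerm
  rw [show 2 * (m + 1) + n = 2 * m + (n + 1) + 1 by ring, show m + 1 + n = m + (n + 1) by ring,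
    Nat.factorial_succ m, pow_succ, pow_succ (z / 2)]
  push_cast
  field_simp

theorem abs_le {r : ℝ} (hz : |z| ≤ r) :
    |besselTerm n m z| ≤ r ^ (2 * m + n) / (Nat.factorial m : ℝ) := by
  have hfac : (1 : ℝ) ≤ Nat.factorial (m + n) := Nat.one_le_cast.mpr (Nat.factorial_pos _)
  have hr : 0 ≤ r := (abs_nonneg z).trans hz
  have hz2 : |z / 2| ≤ r := by rw [abs_div, abs_two]; linarith [abs_nonneg z]
  rw [besselTerm, abs_div, abs_mul, abs_pow, abs_pow, abs_neg, abs_one, one_pow, one_mul,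
    abs_of_pos (by positivity : (0 : ℝ) < Nat.factorial m * Nat.factorial (m + n))]
  calc |z / 2| ^ (2 * m + n) / ((Nat.factorial m : ℝ) * Nat.factorial (m + n))
      ≤ r ^ (2 * m + n) / ((Nat.factorial m : ℝ) * 1) := by gcongr
    _ = r ^ (2 * m + n) / (Nat.factorial m : ℝ) := by rw [mul_one]

theorem abs_deriv_le {r : ℝ} (hr : 1 ≤ r) (hz : |z| ≤ r) :
    |besselTermDeriv n m z| ≤ r ^ (2 * m + n) / (Nat.factorial m : ℝ) := by
  have hcoef : ((2 * m + n : ℕ) : ℝ) ≤ 2 * Nat.factorial (m + n) := by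
    have := Nat.self_le_factorial (m + n)
    exact_mod_cast (by omega : 2 * m + n ≤ 2 * (m + n)).trans (by omega)
  have hz2 : |z / 2| ≤ r := by rw [abs_div, abs_two]; linarith [abs_nonneg z]
  have hpow : |z / 2| ^ (2 * m + n - 1) ≤ r ^ (2 * m + n) :=
    (pow_le_pow_left₀ (abs_nonneg _) hz2 _).trans (pow_le_pow_right₀ hr (Nat.sub_le _ _))
  rw [besselTermDeriv, abs_div, abs_mul, abs_mul, abs_pow, abs_pow, abs_neg, abs_one, one_pow,
    one_mul, Nat.abs_cast, abs_of_pos (by positivity :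
      (0 : ℝ) < 2 * (Nat.factorial m * Nat.factorial (m + n)))]
  calc ((2 * m + n : ℕ) : ℝ) * |z / 2| ^ (2 * m + n - 1) /
        (2 * ((Nat.factorial m : ℝ) * Nat.factorial (m + n)))
      ≤ (2 * Nat.factorial (m + n)) * r ^ (2 * m + n) /
        (2 * ((Nat.factorial m : ℝ) * Nat.factorial (m + n))) := by gcongr
    _ = r ^ (2 * m + n) / (Nat.factorial m : ℝ) := by field_simp

end besselTerm

theorem summable_pow_two_mul_add_div_factorial (r : ℝ) (n : ℕ) :
    Summable (fun m : ℕ => r ^ (2 * m + n) / (Nat.factorial m : ℝ)) :=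
  ((Real.summable_pow_div_factorial (r ^ 2)).mul_right (r ^ n)).congr fun m => by ring

theorem summable_besselTerm (n : ℕ) (z : ℝ) : Summable (fun m => besselTerm n m z) :=
  .of_norm_bounded (summable_pow_two_mul_add_div_factorial |z| n)
    fun m => besselTerm.abs_le n m z le_rfl

theorem summable_besselTermDeriv (n : ℕ) (z : ℝ) : Summable (fun m => besselTermDeriv n m z) :=
  .of_norm_bounded (summable_pow_two_mul_add_div_factorial (|z| + 1) n)
    fun m => besselTerm.abs_deriv_le n m z (by linarith [abs_nonneg z]) (by linarith)

theorem hasSum_besselJ (n : ℕ) (z : ℝ) : HasSum (fun m => besselTerm n m z) (besselJ n z) :=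
  (summable_besselTerm n z).hasSum

theorem hasDerivAt_besselJ (n : ℕ) (z : ℝ) :
    HasDerivAt (besselJ n) (∑' m, besselTermDeriv n m z) z := by
  have hball : ∀ y ∈ Metric.ball (0 : ℝ) (|z| + 1), |y| ≤ |z| + 1 := fun y hy =>
    (mem_ball_zero_iff.mp hy).le
  exact hasDerivAt_tsum_of_isPreconnected (summable_pow_two_mul_add_div_factorial (|z| + 1) n)
    Metric.isOpen_ball (convex_ball 0 _).isPreconnected
    (fun m y _ => besselTerm.hasDerivAt n m y)
    (fun m y hy => besselTerm.abs_deriv_le n m y (by linarith [abs_nonneg z]) (hball y hy))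
    (by simp [Metric.mem_ball]) (summable_besselTerm n z) (by simp [Metric.mem_ball])

theorem differentiable_besselJ (n : ℕ) : Differentiable ℝ (besselJ n) :=
  fun z => (hasDerivAt_besselJ n z).differentiableAt

theorem hasSum_mul_deriv_besselJ (n : ℕ) (z : ℝ) :
    HasSum (fun m => (2 * m + n : ℕ) * besselTerm n m z) (z * deriv (besselJ n) z) := by
  rw [(hasDerivAt_besselJ n z).deriv]
  simpa only [besselTerm.mul_deriv] using (summable_besselTermDeriv n z).hasSum.mul_left z

theorem mul_deriv_besselJ_succ (n : ℕ) (z : ℝ) :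
    z * deriv (besselJ (n + 1)) z = z * besselJ n z - (n + 1) * besselJ (n + 1) z := by
  refine (hasSum_mul_deriv_besselJ (n + 1) z).unique <|
    (((hasSum_besselJ n z).mul_left z).sub
      ((hasSum_besselJ (n + 1) z).mul_left ((n : ℝ) + 1))).congr_fun fun m => ?_
  rw [besselTerm.mul_eq]
  push_cast
  ring

theorem mul_deriv_besselJ (n : ℕ) (z : ℝ) :
    z * deriv (besselJ n) z = n * besselJ n z - z * besselJ (n + 1) z := by
  have hshift : HasSum (fun m : ℕ => 2 * m * besselTerm n m z) (-(z * besselJ (n + 1) z)) := by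
    rw [← hasSum_nat_add_iff' 1, Finset.sum_range_one, Nat.cast_zero, mul_zero, zero_mul,
      sub_zero]
    refine ((hasSum_besselJ (n + 1) z).mul_left z).neg.congr_fun fun m => ?_
    rw [besselTerm.mul_succ_eq]
    push_cast
    ring
  refine (hasSum_mul_deriv_besselJ n z).unique <|
    (((hasSum_besselJ n z).mul_left (n : ℝ)).add hshift).congr_fun fun m => ?_
  push_cast
  ring

theorem besselJZ_natCast (n : ℕ) : besselJZ n = besselJ n :=
  funext fun z => by simp [besselJZ]

theorem besselJZ_neg (ν : ℤ) (z : ℝ) : besselJZ (-ν) z = (-1) ^ ν * besselJZ ν z := by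
  obtain ⟨n, rfl | rfl⟩ := Int.eq_nat_or_neg ν
  all_goals
    rcases eq_or_ne n 0 with rfl | hn
    · simp
    · simp [besselJZ, hn]

theorem differentiable_besselJZ (ν : ℤ) : Differentiable ℝ (besselJZ ν) := by
  obtain ⟨n, rfl | rfl⟩ := Int.eq_nat_or_neg ν
  · rw [besselJZ_natCast]
    exact differentiable_besselJ n
  · rw [funext (besselJZ_neg n), besselJZ_natCast]
    exact (differentiable_besselJ n).const_mul _

theorem deriv_besselJZ_neg (ν : ℤ) (z : ℝ) :
    deriv (besselJZ (-ν)) z = (-1) ^ ν * deriv (besselJZ ν) z := by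
  rw [funext (besselJZ_neg ν), deriv_const_mul_field']

theorem besselJZ_natCast_add_mul_deriv (n : ℕ) (z : ℝ) :
    2 * n * (besselJZ n z + z * deriv (besselJZ n) z) =
      z * ((n + 1) * besselJZ (n - 1) z - (n - 1) * besselJZ (n + 1) z) := by
  cases n with
  | zero => simp [besselJZ]
  | succ k =>
    have hpred : ((k + 1 : ℕ) : ℤ) - 1 = (k : ℕ) := by push_cast; ring
    have hsucc : ((k + 1 : ℕ) : ℤ) + 1 = (k + 2 : ℕ) := by push_cast; ring
    rw [hpred, hsucc, besselJZ_natCast, besselJZ_natCast, besselJZ_natCast]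
    have h₁ := mul_deriv_besselJ_succ k z
    have h₂ := mul_deriv_besselJ (k + 1) z
    push_cast at h₁ h₂ ⊢
    linear_combination ((k : ℝ) + 2) * h₁ + (k : ℝ) * h₂

theorem besselJZ_add_mul_deriv (ν : ℤ) (z : ℝ) :
    2 * ν * (besselJZ ν z + z * deriv (besselJZ ν) z) =
      z * ((ν + 1) * besselJZ (ν - 1) z - (ν - 1) * besselJZ (ν + 1) z) := by
  obtain ⟨n, rfl | rfl⟩ := Int.eq_nat_or_neg ν
  · exact besselJZ_natCast_add_mul_deriv n z
  · have h := besselJZ_natCast_add_mul_deriv n z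
    rw [show -(n : ℤ) - 1 = -((n : ℤ) + 1) by ring, show -(n : ℤ) + 1 = -((n : ℤ) - 1) by ring,
      besselJZ_neg, besselJZ_neg, besselJZ_neg, deriv_besselJZ_neg,
      zpow_add_one₀ (by norm_num), zpow_sub_one₀ (by norm_num)]
    push_cast
    linear_combination (-(-1 : ℝ) ^ (n : ℤ)) * h

theorem hasDerivAt_mul_mul_besselJZ (ν : ℤ) (q : ℝ) {f : ℝ → ℝ} {x : ℝ}
    (hf : DifferentiableAt ℝ f x) :
    HasDerivAt (fun x => ν * (x * f x * besselJZ ν (q * x)))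
      (q / 2 * ((ν + 1) * (x * f x * besselJZ (ν - 1) (q * x))
          - (ν - 1) * (x * f x * besselJZ (ν + 1) (q * x)))
        + ν * (x * deriv f x * besselJZ ν (q * x))) x := by
  have hJ := (differentiable_besselJZ ν (q * x)).hasDerivAt.comp x
    ((hasDerivAt_id x).const_mul q)
  refine ((((hasDerivAt_id x).mul hf.hasDerivAt).mul hJ).const_mul (ν : ℝ)).congr_deriv ?_
  simp only [id, Function.comp, Pi.mul_apply]
  linear_combination (f x / 2) * besselJZ_add_mul_deriv ν (q * x)

theorem bessel_recurrence_intervalIntegral (ν : ℤ) (q : ℝ) {f : ℝ → ℝ} (hf : ContDiff ℝ 1 f)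
    (R : ℝ) :
    ν * (R * f R * besselJZ ν (q * R)) =
      q / 2 * ((ν + 1) * (∫ x in (0 : ℝ)..R, x * f x * besselJZ (ν - 1) (q * x))
          - (ν - 1) * ∫ x in (0 : ℝ)..R, x * f x * besselJZ (ν + 1) (q * x))
        + ν * ∫ x in (0 : ℝ)..R, x * deriv f x * besselJZ ν (q * x) := by
  have hcont : ∀ (μ : ℤ) {g : ℝ → ℝ}, Continuous g →
      Continuous fun x => x * g x * besselJZ μ (q * x) := fun μ g hg =>
    (continuous_id.mul hg).mul ((differentiable_besselJZ μ).continuous.comp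
      (continuous_const.mul continuous_id))
  have i₁ : IntervalIntegrable (fun x => x * f x * besselJZ (ν - 1) (q * x)) volume 0 R :=
    (hcont (ν - 1) hf.continuous).intervalIntegrable _ _
  have i₂ : IntervalIntegrable (fun x => x * f x * besselJZ (ν + 1) (q * x)) volume 0 R :=
    (hcont (ν + 1) hf.continuous).intervalIntegrable _ _
  have i₃ : IntervalIntegrable (fun x => x * deriv f x * besselJZ ν (q * x)) volume 0 R :=
    (hcont ν (hf.continuous_deriv le_rfl)).intervalIntegrable _ _
  have i₁₂ := (i₁.const_mul ((ν : ℝ) + 1)).sub (i₂.const_mul ((ν : ℝ) - 1))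
  have hFTC := intervalIntegral.integral_eq_sub_of_hasDerivAt
    (fun x _ => hasDerivAt_mul_mul_besselJZ ν q ((hf.differentiable one_ne_zero) x))
    ((i₁₂.const_mul (q / 2)).add (i₃.const_mul (ν : ℝ)))
  rw [intervalIntegral.integral_add (i₁₂.const_mul _) (i₃.const_mul _),
    intervalIntegral.integral_const_mul, intervalIntegral.integral_sub (i₁.const_mul _)
      (i₂.const_mul _), intervalIntegral.integral_const_mul, intervalIntegral.integral_const_mul,
    intervalIntegral.integral_const_mul] at hFTC
  simpa using hFTC.symm

theorem bessel_recurrence_integrals_general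
    (ν : ℤ) (q : ℝ) (hq : 0 < q) (f : ℝ → ℝ) (hf : ContDiff ℝ 1 f)
    (hliminf : Tendsto (fun x : ℝ => x * f x * besselJZ ν (q * x)) atTop (𝓝 0))
    (L₁ L₂ L₃ : ℝ)
    (h₁ : HasImproperIntegral (fun x : ℝ => x * f x * besselJZ (ν + 1) (q * x)) L₁)
    (h₂ : HasImproperIntegral (fun x : ℝ => x * f x * besselJZ (ν - 1) (q * x)) L₂)
    (h₃ : HasImproperIntegral (fun x : ℝ => x * deriv f x * besselJZ ν (q * x)) L₃) :
    ((ν : ℝ) - 1) * L₁ = ((ν : ℝ) + 1) * L₂ + (2 * (ν : ℝ) / q) * L₃ := by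
  have hlim : Tendsto (fun R : ℝ => ν * (R * f R * besselJZ ν (q * R))) atTop
      (𝓝 (q / 2 * ((ν + 1) * L₂ - (ν - 1) * L₁) + ν * L₃)) := by
    simp_rw [bessel_recurrence_intervalIntegral ν q hf]
    exact (((h₂.const_mul _).sub (h₁.const_mul _)).const_mul _).add (h₃.const_mul _)
  have hzero := tendsto_nhds_unique (hliminf.const_mul (ν : ℝ)) hlim
  field_simp
  linear_combination 2 * hzero

theorem bessel_recurrence_integrals
    (ν : ℤ) (hν : -1 < ν) (q : ℝ) (hq : 0 < q) (f : ℝ → ℝ) (hf : ContDiff ℝ 1 f)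
    (hlim0 : Tendsto (fun x : ℝ => x * f x * besselJZ ν (q * x)) (𝓝[>] 0) (𝓝 0))
    (hliminf : Tendsto (fun x : ℝ => x * f x * besselJZ ν (q * x)) atTop (𝓝 0))
    (L₁ L₂ L₃ : ℝ)
    (h₁ : HasImproperIntegral (fun x : ℝ => x * f x * besselJZ (ν + 1) (q * x)) L₁)
    (h₂ : HasImproperIntegral (fun x : ℝ => x * f x * besselJZ (ν - 1) (q * x)) L₂)
    (h₃ : HasImproperIntegral (fun x : ℝ => x * deriv f x * besselJZ ν (q * x)) L₃) :
    ((ν : ℝ) - 1) * L₁ = ((ν : ℝ) + 1) * L₂ + (2 * (ν : ℝ) / q) * L₃ :=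
  bessel_recurrence_integrals_general ν q hq f hf hliminf L₁ L₂ L₃ h₁ h₂ h₃
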